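/- Let q be a complex number with |q| = 1 (i.e. q·q̄ = 1). Then there exists a unique star structure ★ₛ on SL_q(2,ℂ) fixing all four generators: a^{★ₛ} = a, b^{★ₛ} = b, c^{★ₛ} = c, d^{★ₛ} = d, and it is a Hopf star structure: Δ(x^{★ₛ}) = (★ₛ ⊗ ★ₛ)(Δ(x)) for all x, where Δ is the matrix comultiplication. (This real form is the quantum group SL_q(2,ℝ).) -/

import Mathlib

noncomputable section

open FreeAlgebra
open scoped TensorProduct

/-- The Manin relations with parameter `q` together with the determinant relation
`a d − q⁻¹ b c = 1`. -/
inductive SLRel (q : ℂ) : FreeAlgebra ℂ (Fin 4) → FreeAlgebra ℂ (Fin 4) → Prop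
  | ab : SLRel q (ι ℂ 0 * ι ℂ 1) (q⁻¹ • (ι ℂ 1 * ι ℂ 0))
  | ac : SLRel q (ι ℂ 0 * ι ℂ 2) (q⁻¹ • (ι ℂ 2 * ι ℂ 0))
  | bd : SLRel q (ι ℂ 1 * ι ℂ 3) (q⁻¹ • (ι ℂ 3 * ι ℂ 1))
  | cd : SLRel q (ι ℂ 2 * ι ℂ 3) (q⁻¹ • (ι ℂ 3 * ι ℂ 2))
  | bc : SLRel q (ι ℂ 1 * ι ℂ 2) (ι ℂ 2 * ι ℂ 1)
  | ad : SLRel q (ι ℂ 0 * ι ℂ 3 - ι ℂ 3 * ι ℂ 0) ((q⁻¹ - q) • (ι ℂ 1 * ι ℂ 2))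
  | det : SLRel q (ι ℂ 0 * ι ℂ 3 - q⁻¹ • (ι ℂ 1 * ι ℂ 2)) 1

/-- `SL_q(2,ℂ)`. -/
abbrev SLq (q : ℂ) := RingQuot (SLRel q)

/-- The images of the generators `a, b, c, d` in `SL_q(2,ℂ)`. -/
def gen (q : ℂ) (i : Fin 4) : SLq q := RingQuot.mkAlgHom ℂ (SLRel q) (ι ℂ i)

/-- A star structure on a complex algebra: additive, conjugate-linear,
antimultiplicative, unital, involutive. -/
def IsStar {A : Type*} [Ring A] [Algebra ℂ A] (st : A → A) : Prop :=
  (∀ x y : A, st (x + y) = st x + st y) ∧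
  (∀ (z : ℂ) (x : A), st (z • x) = (starRingEnd ℂ) z • st x) ∧
  (∀ x y : A, st (x * y) = st y * st x) ∧
  st 1 = 1 ∧
  (∀ x : A, st (st x) = x)

/-- `Δ` is the matrix comultiplication of `SL_q(2,ℂ)`. -/
def IsComul (q : ℂ) (Δ : SLq q →ₐ[ℂ] (SLq q ⊗[ℂ] SLq q)) : Prop :=
  Δ (gen q 0) = gen q 0 ⊗ₜ[ℂ] gen q 0 + gen q 1 ⊗ₜ[ℂ] gen q 2 ∧
  Δ (gen q 1) = gen q 0 ⊗ₜ[ℂ] gen q 1 + gen q 1 ⊗ₜ[ℂ] gen q 3 ∧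
  Δ (gen q 2) = gen q 2 ⊗ₜ[ℂ] gen q 0 + gen q 3 ⊗ₜ[ℂ] gen q 2 ∧
  Δ (gen q 3) = gen q 2 ⊗ₜ[ℂ] gen q 1 + gen q 3 ⊗ₜ[ℂ] gen q 3

/-- The prescribed values of the star structure on the generators. -/
def StarVals (q : ℂ) (st : SLq q → SLq q) : Prop :=
  st (gen q 0) = gen q 0 ∧ st (gen q 1) = gen q 1 ∧
  st (gen q 2) = gen q 2 ∧ st (gen q 3) = gen q 3

/-!
Because `q̄ = q⁻¹`, extending `a, b, c, d ↦ a, b, c, d` conjugate-linearly and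
anti-multiplicatively sends every defining relation of `SL_q(2,ℂ)` to a consequence of the
relations (`ab = q⁻¹ba` becomes `ba = q ab`, and `ad − q⁻¹bc = 1` becomes `da − q cb = 1`), so
`★` exists as an algebra map into the opposite algebra with conjugated scalars.
A conjugate-linear antihomomorphism is determined by its values on generators. This gives
uniqueness and `★★ = id`, and the Hopf property: `Δ ∘ ★` and `(★ ⊗ ★) ∘ Δ` are both
conjugate-linear antihomomorphisms, and they agree on `a, b, c, d` because `★` fixes every
entry of the matrix coproduct.
-/

section ConjAntiHom

variable {A B C D : Type*} [Ring A] [Algebra ℂ A] [Ring B] [Algebra ℂ B] [Ring C] [Algebra ℂ C]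
  [Ring D] [Algebra ℂ D]

structure IsConjAntiHom (f : A → B) : Prop where
  map_add : ∀ x y, f (x + y) = f x + f y
  map_smul : ∀ (z : ℂ) x, f (z • x) = starRingEnd ℂ z • f x
  map_mul : ∀ x y, f (x * y) = f y * f x
  map_one : f 1 = 1

theorem IsStar.isConjAntiHom {st : A → A} (h : IsStar st) : IsConjAntiHom st :=
  ⟨h.1, h.2.1, h.2.2.1, h.2.2.2.1⟩

namespace IsConjAntiHom

variable {f : A → B}

theorem map_algebraMap (hf : IsConjAntiHom f) (z : ℂ) :
    f (algebraMap ℂ A z) = algebraMap ℂ B (starRingEnd ℂ z) := by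
  rw [Algebra.algebraMap_eq_smul_one, hf.map_smul, hf.map_one, Algebra.algebraMap_eq_smul_one]

theorem algHom_comp (φ : B →ₐ[ℂ] C) (hf : IsConjAntiHom f) : IsConjAntiHom (φ ∘ f) where
  map_add x y := by simp [hf.map_add]
  map_smul z x := by simp [hf.map_smul]
  map_mul x y := by simp [hf.map_mul]
  map_one := by simp [hf.map_one]

theorem comp_algHom {g : B → C} (hg : IsConjAntiHom g) (φ : A →ₐ[ℂ] B) :
    IsConjAntiHom (g ∘ φ) where
  map_add x y := by simp [hg.map_add]
  map_smul z x := by simp [hg.map_smul]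
  map_mul x y := by simp [hg.map_mul]
  map_one := by simp [hg.map_one]

theorem eq_of_eqOn {s : Set A} (hs : Algebra.adjoin ℂ s = ⊤) {g : A → B}
    (hf : IsConjAntiHom f) (hg : IsConjAntiHom g) (h : Set.EqOn f g s) : f = g := by
  funext x
  induction (hs ▸ Algebra.mem_top : x ∈ Algebra.adjoin ℂ s) using Algebra.adjoin_induction with
  | mem x hx => exact h hx
  | algebraMap z => rw [hf.map_algebraMap, hg.map_algebraMap]
  | add x y _ _ hx hy => rw [hf.map_add, hg.map_add, hx, hy]
  | mul x y _ _ hx hy => rw [hf.map_mul, hg.map_mul, hx, hy]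

theorem involutive_of_eqOn {s : Set A} (hs : Algebra.adjoin ℂ s = ⊤) {g : A → A}
    (hg : IsConjAntiHom g) (h : ∀ x ∈ s, g (g x) = x) : Function.Involutive g := by
  intro x
  induction (hs ▸ Algebra.mem_top : x ∈ Algebra.adjoin ℂ s) using Algebra.adjoin_induction with
  | mem x hx => exact h x hx
  | algebraMap z => rw [hg.map_algebraMap, hg.map_algebraMap, Complex.conj_conj]
  | add x y _ _ hx hy => rw [hg.map_add, hg.map_add, hx, hy]
  | mul x y _ _ hx hy => rw [hg.map_mul, hg.map_mul, hx, hy]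

def toSemilinearMap (hf : IsConjAntiHom f) : A →ₛₗ[starRingEnd ℂ] B where
  toFun := f
  map_add' := hf.map_add
  map_smul' := hf.map_smul

open TensorProduct in
theorem tensorProductMap {g : C → D} (hf : IsConjAntiHom f) (hg : IsConjAntiHom g) :
    IsConjAntiHom (TensorProduct.map hf.toSemilinearMap hg.toSemilinearMap) where
  map_add := LinearMap.map_add _
  map_smul := LinearMap.map_smulₛₗ _
  map_mul u v := by
    induction u using TensorProduct.induction_on with
    | zero => simp
    | add u₁ u₂ h₁ h₂ => rw [add_mul, LinearMap.map_add, LinearMap.map_add, h₁, h₂, mul_add]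
    | tmul x y =>
      induction v using TensorProduct.induction_on with
      | zero => simp
      | add v₁ v₂ h₁ h₂ => rw [mul_add, LinearMap.map_add, LinearMap.map_add, h₁, h₂, add_mul]
      | tmul x' y' =>
        simp only [Algebra.TensorProduct.tmul_mul_tmul, map_tmul]
        exact congrArg₂ _ (hf.map_mul x x') (hg.map_mul y y')
  map_one := by
    rw [Algebra.TensorProduct.one_def, map_tmul]
    exact congrArg₂ _ hf.map_one hg.map_one

end IsConjAntiHom

end ConjAntiHom

/-- `Bᵐᵒᵖ` with `ℂ` acting through complex conjugation: conjugate-linear antihomomorphisms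
`A → B` are the `ℂ`-algebra homomorphisms `A →ₐ[ℂ] ConjOpposite B`. -/
def ConjOpposite (B : Type*) : Type _ := Bᵐᵒᵖ

namespace ConjOpposite

variable {B : Type*}

def op : B → ConjOpposite B := MulOpposite.op

def unop : ConjOpposite B → B := MulOpposite.unop

@[simp] theorem unop_op (x : B) : unop (op x) = x := rfl

theorem unop_injective : Function.Injective (unop : ConjOpposite B → B) :=
  MulOpposite.unop_injective

variable [Ring B]

instance : Ring (ConjOpposite B) := inferInstanceAs (Ring Bᵐᵒᵖ)

@[simp] theorem unop_add (x y : ConjOpposite B) : unop (x + y) = unop x + unop y := rfl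
@[simp] theorem unop_sub (x y : ConjOpposite B) : unop (x - y) = unop x - unop y := rfl
@[simp] theorem unop_mul (x y : ConjOpposite B) : unop (x * y) = unop y * unop x := rfl
@[simp] theorem unop_one : unop (1 : ConjOpposite B) = 1 := rfl

variable [Algebra ℂ B]

instance : Algebra ℂ (ConjOpposite B) :=
  RingHom.toAlgebra' ((algebraMap ℂ Bᵐᵒᵖ).comp (starRingEnd ℂ))
    fun z x => Algebra.commutes (A := Bᵐᵒᵖ) (starRingEnd ℂ z) x

@[simp] theorem unop_smul (z : ℂ) (x : ConjOpposite B) :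
    unop (z • x) = starRingEnd ℂ z • unop x := by
  change unop x * algebraMap ℂ B (starRingEnd ℂ z) = _
  rw [← Algebra.commutes, Algebra.smul_def]

theorem isConjAntiHom_unop_comp {A : Type*} [Ring A] [Algebra ℂ A]
    (φ : A →ₐ[ℂ] ConjOpposite B) : IsConjAntiHom (unop ∘ φ) where
  map_add x y := by simp
  map_smul z x := by simp
  map_mul x y := by simp
  map_one := by simp

end ConjOpposite

theorem StarVals.apply {q : ℂ} {st : SLq q → SLq q} (h : StarVals q st) (i : Fin 4) :
    st (gen q i) = gen q i := by
  obtain ⟨h0, h1, h2, h3⟩ := h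
  fin_cases i <;> assumption

namespace SLq

variable (q : ℂ)

@[simp] theorem mkAlgHom_ι (i : Fin 4) : RingQuot.mkAlgHom ℂ (SLRel q) (ι ℂ i) = gen q i := rfl

theorem adjoin_range_gen : Algebra.adjoin ℂ (Set.range (gen q)) = ⊤ := by
  rw [show Set.range (gen q) = RingQuot.mkAlgHom ℂ (SLRel q) '' Set.range (ι ℂ) from
      Set.range_comp _ _, Algebra.adjoin_image, FreeAlgebra.adjoin_range_ι, Algebra.map_top,
    AlgHom.range_eq_top]
  exact RingQuot.mkAlgHom_surjective ℂ _

def starLift : FreeAlgebra ℂ (Fin 4) →ₐ[ℂ] ConjOpposite (SLq q) :=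
  FreeAlgebra.lift ℂ fun i => ConjOpposite.op (gen q i)

variable {q}

theorem starLift_rel (hq : q * starRingEnd ℂ q = 1) ⦃x y : FreeAlgebra ℂ (Fin 4)⦄
    (h : SLRel q x y) : starLift q x = starLift q y := by
  have hconj : starRingEnd ℂ q = q⁻¹ := eq_inv_of_mul_eq_one_right hq
  have hqq : q * q⁻¹ = 1 := mul_inv_cancel₀ (left_ne_zero_of_mul_eq_one hq)
  have hbc := RingQuot.mkAlgHom_rel ℂ (SLRel.bc (q := q))
  have had := RingQuot.mkAlgHom_rel ℂ (SLRel.ad (q := q))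
  have hrel := RingQuot.mkAlgHom_rel ℂ h
  simp only [map_mul, map_sub, map_smul, mkAlgHom_ι] at hbc had
  apply ConjOpposite.unop_injective
  induction h <;>
    simp only [starLift, map_mul, map_sub, map_smul, map_one, mkAlgHom_ι, lift_ι_apply,
      ConjOpposite.unop_mul, ConjOpposite.unop_sub, ConjOpposite.unop_smul, ConjOpposite.unop_op,
      ConjOpposite.unop_one, map_inv₀, hconj, inv_inv] at hrel ⊢
  case ab => linear_combination (norm := module) (-q) • hrel - hqq • (gen q 1 * gen q 0)
  case ac => linear_combination (norm := module) (-q) • hrel - hqq • (gen q 2 * gen q 0)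
  case bd => linear_combination (norm := module) (-q) • hrel - hqq • (gen q 3 * gen q 1)
  case cd => linear_combination (norm := module) (-q) • hrel - hqq • (gen q 3 * gen q 2)
  case bc => exact hrel.symm
  case ad => linear_combination (norm := module) -hrel - (q⁻¹ - q) • hbc
  case det => linear_combination (norm := module) hrel - had + q • hbc

variable (hq : q * starRingEnd ℂ q = 1)

def realStar : SLq q → SLq q :=
  ConjOpposite.unop ∘ RingQuot.liftAlgHom ℂ ⟨starLift q, starLift_rel hq⟩

theorem realStar_gen (i : Fin 4) : realStar hq (gen q i) = gen q i := by
  change ConjOpposite.unop (RingQuot.liftAlgHom ℂ _ (RingQuot.mkAlgHom ℂ (SLRel q) (ι ℂ i))) = _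
  rw [RingQuot.liftAlgHom_mkAlgHom_apply, starLift, lift_ι_apply, ConjOpposite.unop_op]

theorem starVals_realStar : StarVals q (realStar hq) :=
  ⟨realStar_gen hq 0, realStar_gen hq 1, realStar_gen hq 2, realStar_gen hq 3⟩

theorem isConjAntiHom_realStar : IsConjAntiHom (realStar hq) :=
  ConjOpposite.isConjAntiHom_unop_comp _

theorem isStar_realStar : IsStar (realStar hq) := by
  have h := isConjAntiHom_realStar hq
  refine ⟨h.map_add, h.map_smul, h.map_mul, h.map_one, ?_⟩
  exact h.involutive_of_eqOn (adjoin_range_gen q) <| by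
    rintro _ ⟨i, rfl⟩
    rw [realStar_gen, realStar_gen]

variable {st : SLq q → SLq q}

theorem eq_realStar (hst : IsConjAntiHom st) (hvals : StarVals q st) : st = realStar hq :=
  hst.eq_of_eqOn (adjoin_range_gen q) (isConjAntiHom_realStar hq) <| by
    rintro _ ⟨i, rfl⟩
    rw [hvals.apply, realStar_gen]

theorem comul_comp_eq_tensorMap_comp (hst : IsConjAntiHom st) (hvals : StarVals q st)
    {Δ : SLq q →ₐ[ℂ] SLq q ⊗[ℂ] SLq q} (hΔ : IsComul q Δ) :
    Δ ∘ st = TensorProduct.map hst.toSemilinearMap hst.toSemilinearMap ∘ Δ :=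
  (hst.algHom_comp Δ).eq_of_eqOn (adjoin_range_gen q)
    ((hst.tensorProductMap hst).comp_algHom Δ) <| by
    obtain ⟨hΔ0, hΔ1, hΔ2, hΔ3⟩ := hΔ
    rintro _ ⟨i, rfl⟩
    fin_cases i <;> simp [hvals.apply, hΔ0, hΔ1, hΔ2, hΔ3, IsConjAntiHom.toSemilinearMap]

end SLq

/-- For `q` of modulus one (`q·q̄ = 1`) there is a unique star structure `★ₛ` on
`SL_q(2,ℂ)` fixing all four generators, and it is a Hopf star structure:
`Δ(x^★) = (★ ⊗ ★)(Δ(x))` for all `x`.  (The real form `SL_q(2,ℝ)`.) -/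
theorem sl2r_star_exists_unique (q : ℂ) (hq : q * (starRingEnd ℂ) q = 1) :
    (∃! st : SLq q → SLq q, IsStar st ∧ StarVals q st) ∧
    (∀ st : SLq q → SLq q, IsStar st ∧ StarVals q st →
      ∀ Δ : SLq q →ₐ[ℂ] (SLq q ⊗[ℂ] SLq q), IsComul q Δ →
        ∃ T : (SLq q ⊗[ℂ] SLq q) → (SLq q ⊗[ℂ] SLq q),
          (∀ u v : SLq q ⊗[ℂ] SLq q, T (u + v) = T u + T v) ∧
          (∀ x y : SLq q, T (x ⊗ₜ[ℂ] y) = st x ⊗ₜ[ℂ] st y) ∧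
          (∀ x : SLq q, Δ (st x) = T (Δ x))) := by
  refine ⟨⟨SLq.realStar hq, ⟨SLq.isStar_realStar hq, SLq.starVals_realStar hq⟩, ?_⟩, ?_⟩
  · rintro st ⟨hst, hvals⟩
    exact SLq.eq_realStar hq hst.isConjAntiHom hvals
  · rintro st ⟨hst, hvals⟩ Δ hΔ
    exact ⟨_, map_add _, fun _ _ => rfl,
      congrFun (SLq.comul_comp_eq_tensorMap_comp hst.isConjAntiHom hvals hΔ)⟩
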